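/- arXiv:2410.03656 — 7 statements merged into one kernel-verified Lean document; each statement's English description precedes it below -/
import Mathlib

section
/- If G is a complete multipartite graph on n vertices with p partite sets, q of which are singletons, then dim(G) = n − p if q = 0, and dim(G) = n − p + q − 1 if q ≥ 1. -/
open SimpleGraph Function
open scoped Classical

/-- A set `S` is a resolving set of `G`: every pair of distinct vertices differ in
distance to some element of `S`. -/
def IsResolving {V : Type*} (G : SimpleGraph V) (S : Set V) : Prop :=
  ∀ x y : V, x ≠ y → ∃ s ∈ S, G.dist s x ≠ G.dist s y

/-- A fault-tolerant resolving set: removing any single vertex leaves a resolving set. -/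
def IsFTResolving {V : Type*} (G : SimpleGraph V) (S : Set V) : Prop :=
  ∀ s ∈ S, IsResolving G (S \ {s})

/-- The metric dimension of `G`. -/
noncomputable def metricDim {V : Type*} [Fintype V] (G : SimpleGraph V) : ℕ :=
  sInf {n | ∃ S : Finset V, IsResolving G ↑S ∧ S.card = n}

/-- The fault-tolerant metric dimension of `G`. -/
noncomputable def ftDim {V : Type*} [Fintype V] (G : SimpleGraph V) : ℕ :=
  sInf {n | ∃ S : Finset V, IsFTResolving G ↑S ∧ S.card = n}

/-- `S` is a `k`-resolving set: every pair of distinct vertices is distinguished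
by at least `k` vertices of `S`. -/
def IsKResolving {V : Type*} [Fintype V] (G : SimpleGraph V) (k : ℕ) (S : Finset V) : Prop :=
  ∀ x y : V, x ≠ y → k ≤ (S.filter (fun s => G.dist s x ≠ G.dist s y)).card

/-- The `k`-metric dimension of `G`. -/
noncomputable def kMetricDim {V : Type*} [Fintype V] (G : SimpleGraph V) (k : ℕ) : ℕ :=
  sInf {n | ∃ S : Finset V, IsKResolving G k S ∧ S.card = n}

/-- The complete multipartite graph determined by a coloring `f : V → ι`: two vertices
are adjacent iff they lie in different parts (fibers of `f`). -/
def completeMultipartiteOn {V ι : Type*} (f : V → ι) : SimpleGraph V where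
  Adj x y := f x ≠ f y
  symm := ⟨fun _ _ h => h.symm⟩
  loopless := ⟨fun _ h => h rfl⟩

/-!
In a complete multipartite graph with at least two parts, two distinct vertices are at distance
`1` or `2` according as they lie in different parts or the same one. Hence a vertex `s` outside
`{x, y}` resolves `x` and `y` exactly when it lies in the part of one of them but not of the other,
and a set `S` is resolving iff its complement meets every part at most once and contains at most
one vertex of a singleton part. The largest such complement takes one vertex from each of the
`p - q` larger parts and one from a single singleton part if there is one.
-/

open Finset

theorem metricDim_eq_of_exists_of_forall_le {W : Type*} [Fintype W] {G : SimpleGraph W} {m : ℕ}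
    (hex : ∃ S : Finset W, IsResolving G ↑S ∧ #S = m)
    (hle : ∀ S : Finset W, IsResolving G ↑S → m ≤ #S) :
    metricDim G = m := by
  obtain ⟨S, hS, rfl⟩ := hex
  refine le_antisymm (Nat.sInf_le ⟨S, hS, rfl⟩) (le_csInf ⟨_, S, hS, rfl⟩ ?_)
  rintro k ⟨T, hT, rfl⟩
  exact hle T hT

section CompleteMultipartite

variable {V ι : Type*} {f : V → ι}

theorem dist_completeMultipartiteOn_of_ne [Fintype ι] (hf : Surjective f)
    (hp : 2 ≤ Fintype.card ι) {s x : V} (hsx : s ≠ x) :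
    (completeMultipartiteOn f).dist s x = if f s = f x then 2 else 1 := by
  split_ifs with hfsx
  · obtain ⟨j, hj⟩ := Fintype.exists_ne_of_one_lt_card hp (f s)
    obtain ⟨w, rfl⟩ := hf j
    have hsw : (completeMultipartiteOn f).Adj s w := Ne.symm hj
    have hwx : (completeMultipartiteOn f).Adj w x := fun h => hj (h.trans hfsx.symm)
    let path := Walk.cons hsw (Walk.cons hwx Walk.nil)
    have hle : (completeMultipartiteOn f).dist s x ≤ 2 := dist_le path
    have hpos : 0 < (completeMultipartiteOn f).dist s x := Reachable.pos_dist_of_ne ⟨path⟩ hsx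
    have hne : (completeMultipartiteOn f).dist s x ≠ 1 :=
      fun h => (dist_eq_one_iff_adj.mp h : f s ≠ f x) hfsx
    omega
  · exact dist_eq_one_iff_adj.mpr hfsx

theorem dist_completeMultipartiteOn_ne_iff [Fintype ι] (hf : Surjective f)
    (hp : 2 ≤ Fintype.card ι) {s x y : V} (hsx : s ≠ x) (hsy : s ≠ y) :
    (completeMultipartiteOn f).dist s x ≠ (completeMultipartiteOn f).dist s y ↔
      ¬(f s = f x ↔ f s = f y) := by
  rw [dist_completeMultipartiteOn_of_ne hf hp hsx, dist_completeMultipartiteOn_of_ne hf hp hsy]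
  split_ifs <;> simp_all

theorem dist_completeMultipartiteOn_self_ne [Fintype ι] (hf : Surjective f)
    (hp : 2 ≤ Fintype.card ι) {x y : V} (hxy : x ≠ y) :
    (completeMultipartiteOn f).dist x x ≠ (completeMultipartiteOn f).dist x y := by
  rw [dist_self, dist_completeMultipartiteOn_of_ne hf hp hxy]
  split_ifs <;> simp

theorem IsResolving.exists_separating_of_notMem [Fintype ι] (hf : Surjective f)
    (hp : 2 ≤ Fintype.card ι) {S : Finset V} (hS : IsResolving (completeMultipartiteOn f) ↑S)
    {u v : V} (hu : u ∉ S) (hv : v ∉ S) (huv : u ≠ v) :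
    ∃ s ∈ S, s ≠ u ∧ s ≠ v ∧ ¬(f s = f u ↔ f s = f v) := by
  obtain ⟨s, hs, hd⟩ := hS u v huv
  have hsu := ne_of_mem_of_not_mem hs hu
  have hsv := ne_of_mem_of_not_mem hs hv
  exact ⟨s, hs, hsu, hsv, (dist_completeMultipartiteOn_ne_iff hf hp hsu hsv).mp hd⟩

variable [Fintype V] [Fintype ι]

noncomputable def singletonParts (f : V → ι) : Finset ι :=
  univ.filter fun i => #(univ.filter fun v : V => f v = i) = 1

theorem mem_singletonParts_iff {x : V} :
    f x ∈ singletonParts f ↔ ∀ w, f w = f x → w = x := by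
  simp only [singletonParts, mem_filter, mem_univ, true_and, card_eq_one]
  constructor
  · rintro ⟨a, ha⟩ w hw
    have hw' : w ∈ univ.filter fun v : V => f v = f x := by simp [hw]
    have hx' : x ∈ univ.filter fun v : V => f v = f x := by simp
    rw [ha, mem_singleton] at hw' hx'
    rw [hw', hx']
  · intro h
    exact ⟨x, eq_singleton_iff_unique_mem.mpr
      ⟨by simp, fun w hw => h w (by simpa using hw)⟩⟩

theorem IsResolving.injOn_compl (hf : Surjective f) (hp : 2 ≤ Fintype.card ι) {S : Finset V}
    (hS : IsResolving (completeMultipartiteOn f) ↑S) : Set.InjOn f ↑Sᶜ := by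
  intro u hu v hv hfuv
  by_contra huv
  obtain ⟨s, -, -, -, hd⟩ :=
    hS.exists_separating_of_notMem hf hp (mem_compl.mp hu) (mem_compl.mp hv) huv
  exact hd (by rw [hfuv])

theorem IsResolving.card_image_compl_inter_singletonParts_le_one (hf : Surjective f)
    (hp : 2 ≤ Fintype.card ι) {S : Finset V} (hS : IsResolving (completeMultipartiteOn f) ↑S) :
    #(Sᶜ.image f ∩ singletonParts f) ≤ 1 := by
  refine card_le_one.mpr ?_
  simp only [mem_inter, mem_image, mem_compl]
  rintro _ ⟨⟨u, hu, rfl⟩, hu1⟩ _ ⟨⟨v, hv, rfl⟩, hv1⟩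
  by_contra hfuv
  obtain ⟨s, -, hsu, hsv, hd⟩ :=
    hS.exists_separating_of_notMem hf hp hu hv fun h => hfuv (congrArg f h)
  by_cases hfs : f s = f u
  · exact hsu (mem_singletonParts_iff.mp hu1 s hfs)
  · exact hsv (mem_singletonParts_iff.mp hv1 s (by tauto))

theorem isResolving_of_injOn_compl (hf : Surjective f) (hp : 2 ≤ Fintype.card ι)
    {S : Finset V} (hinj : Set.InjOn f ↑Sᶜ)
    (hsingle : #(Sᶜ.image f ∩ singletonParts f) ≤ 1) :
    IsResolving (completeMultipartiteOn f) ↑S := by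
  intro x y hxy
  by_cases hx : x ∈ S
  · exact ⟨x, hx, dist_completeMultipartiteOn_self_ne hf hp hxy⟩
  by_cases hy : y ∈ S
  · exact ⟨y, hy, (dist_completeMultipartiteOn_self_ne hf hp hxy.symm).symm⟩
  have hfxy : f x ≠ f y := fun h => hxy (hinj (by simpa using hx) (by simpa using hy) h)
  have hnot_both : f x ∉ singletonParts f ∨ f y ∉ singletonParts f := by
    by_contra! h
    exact hfxy (card_le_one.mp hsingle
      _ (mem_inter.mpr ⟨mem_image_of_mem f (mem_compl.mpr hx), h.1⟩)
      _ (mem_inter.mpr ⟨mem_image_of_mem f (mem_compl.mpr hy), h.2⟩))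
  have partner : ∀ z, z ∉ S → f z ∉ singletonParts f → ∃ w ∈ S, f w = f z := by
    intro z hz hzs
    obtain ⟨w, hwz, hw⟩ : ∃ w, f w = f z ∧ w ≠ z := by
      simpa [mem_singletonParts_iff] using hzs
    exact ⟨w, by_contra fun hwS => hw (hinj (by simpa using hwS) (by simpa using hz) hwz), hwz⟩
  have separates : ∀ w ∈ S, (f w = f x ∨ f w = f y) →
      ∃ s ∈ (S : Set V),
        (completeMultipartiteOn f).dist s x ≠ (completeMultipartiteOn f).dist s y := by
    intro w hwS hw
    refine ⟨w, hwS, (dist_completeMultipartiteOn_ne_iff hf hp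
      (ne_of_mem_of_not_mem hwS hx) (ne_of_mem_of_not_mem hwS hy)).mpr ?_⟩
    rcases hw with hw | hw <;> simp [hw, hfxy, hfxy.symm]
  rcases hnot_both with h | h
  · obtain ⟨w, hwS, hw⟩ := partner x hx h
    exact separates w hwS (.inl hw)
  · obtain ⟨w, hwS, hw⟩ := partner y hy h
    exact separates w hwS (.inr hw)

theorem IsResolving.card_compl_le (hf : Surjective f) (hp : 2 ≤ Fintype.card ι)
    {S : Finset V} (hS : IsResolving (completeMultipartiteOn f) ↑S) :
    #Sᶜ ≤ Fintype.card ι - #(singletonParts f) + min 1 #(singletonParts f) := by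
  have hinj := hS.injOn_compl hf hp
  have hsingle := hS.card_image_compl_inter_singletonParts_le_one hf hp
  have hlarge : #(Sᶜ.image f \ singletonParts f) ≤ Fintype.card ι - #(singletonParts f) := by
    rw [← card_compl]
    exact card_le_card fun i hi => mem_compl.mpr (mem_sdiff.mp hi).2
  have hsmall : #(Sᶜ.image f ∩ singletonParts f) ≤ #(singletonParts f) :=
    card_le_card inter_subset_right
  calc #Sᶜ = #(Sᶜ.image f) := (card_image_of_injOn hinj).symm
    _ = #(Sᶜ.image f ∩ singletonParts f) + #(Sᶜ.image f \ singletonParts f) :=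
      (card_inter_add_card_sdiff _ _).symm
    _ ≤ _ := by omega

theorem exists_isResolving_card_compl_eq (hf : Surjective f) (hp : 2 ≤ Fintype.card ι) :
    ∃ S : Finset V, IsResolving (completeMultipartiteOn f) ↑S ∧
      #Sᶜ = Fintype.card ι - #(singletonParts f) + min 1 #(singletonParts f) := by
  obtain ⟨J, hJ, hJcard⟩ := exists_subset_card_eq (min_le_right 1 #(singletonParts f))
  set I := (singletonParts f)ᶜ ∪ J
  have hfg : ∀ i, f (surjInv hf i) = i := surjInv_eq hf
  have himage : (I.image (surjInv hf)).image f = I := by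
    rw [image_image, show f ∘ surjInv hf = id from funext hfg, image_id]
  refine ⟨(I.image (surjInv hf))ᶜ, isResolving_of_injOn_compl hf hp ?_ ?_, ?_⟩
  · rw [compl_compl, coe_image]
    rintro _ ⟨i, -, rfl⟩ _ ⟨j, -, rfl⟩ h
    rw [hfg, hfg] at h
    rw [h]
  · rw [compl_compl, himage, union_inter_distrib_right,
      disjoint_iff_inter_eq_empty.mp disjoint_compl_left, empty_union, inter_eq_left.mpr hJ, hJcard]
    exact min_le_left _ _
  · rw [compl_compl, card_image_of_injective _ (injective_surjInv hf),
      card_union_of_disjoint (disjoint_compl_left.mono_right hJ), card_compl, hJcard]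

theorem metricDim_completeMultipartiteOn (hf : Surjective f) (hp : 2 ≤ Fintype.card ι) :
    metricDim (completeMultipartiteOn f) = Fintype.card V -
      (Fintype.card ι - #(singletonParts f) + min 1 #(singletonParts f)) := by
  obtain ⟨S, hS, hcard⟩ := exists_isResolving_card_compl_eq hf hp
  refine metricDim_eq_of_exists_of_forall_le ⟨S, hS, ?_⟩ fun T hT => ?_
  · rw [← hcard, ← card_compl_add_card S]
    omega
  · have := hT.card_compl_le hf hp
    rw [← card_compl_add_card T]
    omega

end CompleteMultipartite

theorem stmt3 {V ι : Type*} [Fintype V] [Fintype ι] (f : V → ι) (hf : Surjective f)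
    (hp : 2 ≤ Fintype.card ι) (n p q : ℕ)
    (hn : n = Fintype.card V) (hpdef : p = Fintype.card ι)
    (hq : q = (Finset.univ.filter
      (fun i : ι => (Finset.univ.filter (fun v : V => f v = i)).card = 1)).card) :
    metricDim (completeMultipartiteOn f) =
      if q = 0 then n - p else n - p + q - 1 := by
  have hpn : p ≤ n := hn ▸ hpdef ▸ Fintype.card_le_of_surjective f hf
  have hqp : q ≤ p := hq ▸ hpdef ▸ card_le_univ _
  rw [metricDim_completeMultipartiteOn hf hp, ← hn, ← hpdef,
    show #(singletonParts f) = q from hq.symm]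
  split_ifs <;> omega
end

section
/- In the graph M_t (t ≥ 1), the set V_2 = {v_1, ..., v_t} is a resolving set; consequently dim(M_t) ≤ t. -/
/-! The distance from `v_i` to a string `u` is `1` if `u i = 1` and `2` otherwise (through the
common neighbour obtained by setting coordinate `i` to `1`), so the distances to `V_2` read off
every string; a vertex `v_i` is told apart from everything else by its distance `0` to itself. -/

open SimpleGraph Function
open scoped Classical

/-- The graph `M_t`: a clique on all binary strings of length `t`, together with
independent vertices `v_1, …, v_t`, where `v_i` is adjacent to exactly those strings
having `1` (`true`) at coordinate `i`. -/
def Mt (t : ℕ) : SimpleGraph ((Fin t → Bool) ⊕ Fin t) where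
  Adj x y :=
    match x, y with
    | Sum.inl u, Sum.inl v => u ≠ v
    | Sum.inl u, Sum.inr i => u i = true
    | Sum.inr i, Sum.inl u => u i = true
    | Sum.inr _, Sum.inr _ => False
  symm := by
    refine ⟨?_⟩
    rintro (u | i) (v | j) h
    · exact h.symm
    · exact h
    · exact h
    · exact h
  loopless := by
    refine ⟨?_⟩
    rintro (u | i) h
    · exact h rfl
    · exact h

theorem metricDim_le_card {V : Type*} [Fintype V] {G : SimpleGraph V} {S : Finset V}
    (hS : IsResolving G S) : metricDim G ≤ S.card :=
  Nat.sInf_le ⟨S, hS, rfl⟩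

namespace Mt

theorem connected (t : ℕ) : (Mt t).Connected := by
  refine (connected_iff_exists_forall_reachable _).2 ⟨Sum.inl fun _ => true, ?_⟩
  rintro (u | i)
  · by_cases hu : (fun _ => true) = u
    · exact hu ▸ Reachable.refl _
    · exact Adj.reachable (G := Mt t) hu
  · exact Adj.reachable (G := Mt t) (rfl : true = true)

theorem dist_inr_inl {t : ℕ} (i : Fin t) (u : Fin t → Bool) :
    (Mt t).dist (Sum.inr i) (Sum.inl u) = if u i then 1 else 2 := by
  split_ifs with hu
  · exact dist_eq_one_iff_adj.2 hu
  · have hcommon : Sum.inl (update u i true) ∈ (Mt t).commonNeighbors (Sum.inr i) (Sum.inl u) :=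
      (Mt t).mem_commonNeighbors.2
        ⟨show update u i true i = true from update_self i true u,
          fun h => hu (by rw [h, update_self])⟩
    have hedist : (Mt t).edist (Sum.inr i) (Sum.inl u) = 2 :=
      edist_eq_two_iff.2 ⟨Sum.inr_ne_inl, hu, _, hcommon⟩
    simp [SimpleGraph.dist, hedist]

theorem isResolving_range_inr (t : ℕ) : IsResolving (Mt t) (Set.range Sum.inr) := by
  have separates_inr (i : Fin t) (x : (Fin t → Bool) ⊕ Fin t) (hx : x ≠ Sum.inr i) :
      (Mt t).dist (Sum.inr i) x ≠ (Mt t).dist (Sum.inr i) (Sum.inr i) := by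
    rw [dist_self]
    exact ((connected t).pos_dist_of_ne hx.symm).ne'
  rintro (u | i) (w | j) hne
  · obtain ⟨i, hi⟩ := Function.ne_iff.1 (Sum.inl_injective.ne_iff.1 hne)
    refine ⟨Sum.inr i, ⟨i, rfl⟩, ?_⟩
    rw [dist_inr_inl, dist_inr_inl]
    cases hu : u i <;> cases hw : w i <;> simp_all
  · exact ⟨_, ⟨j, rfl⟩, separates_inr j _ hne⟩
  · exact ⟨_, ⟨i, rfl⟩, (separates_inr i _ hne.symm).symm⟩
  · exact ⟨_, ⟨i, rfl⟩, (separates_inr i _ hne.symm).symm⟩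

end Mt

theorem stmt7_general (t : ℕ) :
    IsResolving (Mt t) (Set.range (Sum.inr : Fin t → (Fin t → Bool) ⊕ Fin t)) ∧
      metricDim (Mt t) ≤ t := by
  refine ⟨Mt.isResolving_range_inr t, ?_⟩
  calc metricDim (Mt t)
      ≤ (Finset.univ.map (Embedding.inr : Fin t ↪ (Fin t → Bool) ⊕ Fin t)).card :=
        metricDim_le_card (by simpa using Mt.isResolving_range_inr t)
    _ = t := by simp

theorem stmt7 (t : ℕ) (ht : 1 ≤ t) :
    IsResolving (Mt t) (Set.range (Sum.inr : Fin t → (Fin t → Bool) ⊕ Fin t)) ∧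
      metricDim (Mt t) ≤ t :=
  stmt7_general t
end

section
/- Let k ≥ 2, let G be a graph with κ(G) ≥ k+1, let S be a k-resolving set of G, and let x, y be distinct vertices distinguished by vertices s_1,...,s_k ∈ S. Then there exists a vertex s ∈ V(G) \ {s_1,...,s_k} with d(s, S) ≤ 2 that distinguishes x and y. -/
open SimpleGraph Function
open scoped Classical

/-
If no such `s` exists, every vertex that distinguishes `x` and `y` and lies within distance 2 of `S`
is some `s_i`, hence in `S`. Moving one step from a distinguishing vertex `u` towards its nearer
endpoint `x` keeps it distinguishing and changes its distance to `S`-members by at most one, so by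
induction along a geodesic, `d(u, S) ≤ 2` holds exactly when `x ∈ S`. The two halves of a shortest
`x`–`y` path meet within distance 2, which forces `x ∈ S ↔ y ∈ S`; hence `d(u, S) ≤ 2 ↔ x ∈ S` for
every distinguishing `u`. The vertex `s_1 ∈ S` gives `x ∈ S`, and a distinguishing vertex outside
`{s_1, …, s_k}`, which exists since `κ(G) ≥ k + 1`, is then within distance 2 of `S`.
-/

namespace SimpleGraph

variable {V : Type*} {G : SimpleGraph V}

lemma Walk.dist_getVert_getVert_le {u v : V} (p : G.Walk u v) {i j : ℕ} (hij : i ≤ j) :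
    G.dist (p.getVert i) (p.getVert j) ≤ j - i := by
  have hlen : ((p.drop i).take (j - i)).length ≤ j - i := by
    rw [Walk.take_length]
    exact min_le_left _ _
  have h := (dist_le _).trans hlen
  rwa [Walk.drop_getVert, Nat.add_sub_cancel' hij] at h

lemma Walk.dist_getVert_of_length_eq_dist {u v : V} (p : G.Walk u v)
    (hp : p.length = G.dist u v) {i : ℕ} (hi : i ≤ p.length) :
    G.dist u (p.getVert i) = i ∧ G.dist (p.getVert i) v = p.length - i := by
  have hu := p.dist_getVert_getVert_le (Nat.zero_le i)
  have hv := p.dist_getVert_getVert_le hi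
  rw [Walk.getVert_zero] at hu
  rw [Walk.getVert_length] at hv
  have := (p.take i).reachable.dist_triangle_left v
  omega

lemma exists_adj_dist_add_one_eq {u z : V} (h : G.dist u z ≠ 0) :
    ∃ u', G.Adj u u' ∧ G.dist u' z + 1 = G.dist u z := by
  obtain ⟨p, hp⟩ := exists_walk_of_dist_ne_zero h
  have hpos : 0 < p.length := by omega
  refine ⟨p.getVert 1, p.adj_snd (Walk.not_nil_iff_lt_length.mpr hpos), ?_⟩
  have := (p.dist_getVert_of_length_eq_dist hp (i := 1) hpos).2
  omega

lemma exists_dist_le_two_of_lt_of_lt (hG : G.Connected) {x y : V} (hxy : x ≠ y) :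
    ∃ a b, G.dist a x < G.dist a y ∧ G.dist b y < G.dist b x ∧ G.dist a b ≤ 2 := by
  obtain ⟨p, hp⟩ := hG.exists_walk_length_eq_dist x y
  have hpos : 0 < p.length := hp ▸ hG.pos_dist_of_ne hxy
  set i := (p.length - 1) / 2
  set j := p.length - i
  obtain ⟨hxa, hay⟩ := p.dist_getVert_of_length_eq_dist hp (i := i) (by omega)
  obtain ⟨hxb, hby⟩ := p.dist_getVert_of_length_eq_dist hp (i := j) (by omega)
  have hab := p.dist_getVert_getVert_le (i := i) (j := j) (by omega)
  refine ⟨p.getVert i, p.getVert j, ?_, ?_, by omega⟩ <;> rw [dist_comm (v := x)] <;> omega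

/-- `d(s, S) ≤ 2`. -/
def IsNear (G : SimpleGraph V) (S : Set V) (s : V) : Prop :=
  ∃ w ∈ S, G.dist s w ≤ 2

def IsNearClosed (G : SimpleGraph V) (S : Set V) (x y : V) : Prop :=
  ∀ s, G.dist s x ≠ G.dist s y → G.IsNear S s → s ∈ S

namespace IsNearClosed

variable {S : Set V} {x y : V}

lemma symm (hcl : G.IsNearClosed S x y) : G.IsNearClosed S y x :=
  fun s hs => hcl s hs.symm

lemma isNear_of_dist_le_two (hcl : G.IsNearClosed S x y) {u v : V}
    (hu : G.dist u x ≠ G.dist u y) (hnear : G.IsNear S u) (huv : G.dist v u ≤ 2) :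
    G.IsNear S v :=
  ⟨u, hcl u hu hnear, huv⟩

lemma isNear_iff_mem_of_lt (hG : G.Connected) (hcl : G.IsNearClosed S x y) {u : V}
    (hu : G.dist u x < G.dist u y) : G.IsNear S u ↔ x ∈ S := by
  induction hn : G.dist u x generalizing u with
  | zero =>
    obtain rfl := hG.dist_eq_zero_iff.mp hn
    exact ⟨hcl u hu.ne, fun hx => ⟨u, hx, by simp⟩⟩
  | succ n ih =>
    obtain ⟨u', hadj, hu'x⟩ := exists_adj_dist_add_one_eq (G := G) (u := u) (z := x) (by omega)
    have huu' : G.dist u u' = 1 := dist_eq_one_iff_adj.mpr hadj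
    have hu'u : G.dist u' u = 1 := dist_eq_one_iff_adj.mpr hadj.symm
    have := hG.dist_triangle (u := u) (v := u') (w := y)
    have hu' : G.dist u' x < G.dist u' y := by omega
    rw [← ih hu' (by omega)]
    exact ⟨fun h => hcl.isNear_of_dist_le_two hu.ne h (by omega),
      fun h => hcl.isNear_of_dist_le_two hu'.ne h (by omega)⟩

lemma isNear_iff_mem (hG : G.Connected) (hcl : G.IsNearClosed S x y) (hxy : x ≠ y) {u : V}
    (hu : G.dist u x ≠ G.dist u y) : G.IsNear S u ↔ x ∈ S := by
  have hx : ∀ {a}, G.dist a x < G.dist a y → (G.IsNear S a ↔ x ∈ S) :=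
    hcl.isNear_iff_mem_of_lt hG
  have hy : ∀ {b}, G.dist b y < G.dist b x → (G.IsNear S b ↔ y ∈ S) :=
    hcl.symm.isNear_iff_mem_of_lt hG
  have hxy_mem : x ∈ S ↔ y ∈ S := by
    obtain ⟨a, b, ha, hb, hab⟩ := exists_dist_le_two_of_lt_of_lt hG hxy
    rw [← hx ha, ← hy hb]
    exact ⟨fun h => hcl.isNear_of_dist_le_two ha.ne h (dist_comm ▸ hab),
      fun h => hcl.isNear_of_dist_le_two hb.ne' h hab⟩
  rcases hu.lt_or_gt with h | h
  · exact hx h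
  · exact (hy h).trans hxy_mem.symm

end IsNearClosed

end SimpleGraph

lemma exists_mem_filter_notMem_range {V : Type*} [Fintype V] {k : ℕ} (f : Fin k → V)
    (P : V → Prop) [DecidablePred P] (hP : k + 1 ≤ (Finset.univ.filter P).card) :
    ∃ s, P s ∧ s ∉ Set.range f := by
  have hf : (Finset.univ.image f).card < (Finset.univ.filter P).card :=
    (Finset.card_image_le.trans (by simp)).trans_lt hP
  obtain ⟨s, hs, hsf⟩ := Finset.exists_mem_notMem_of_card_lt_card hf
  exact ⟨s, (Finset.mem_filter.mp hs).2, by simpa using hsf⟩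

theorem stmt14_general {V : Type*} [Fintype V] (G : SimpleGraph V) (hG : G.Connected)
    (k : ℕ) (hk : 2 ≤ k)
    (hκ : ∀ x y : V, x ≠ y →
      k + 1 ≤ (Finset.univ.filter (fun s : V => G.dist s x ≠ G.dist s y)).card)
    (S : Finset V)
    (x y : V) (hxy : x ≠ y)
    (f : Fin k → V) (hfS : ∀ i, f i ∈ S)
    (hfd : ∀ i, G.dist (f i) x ≠ G.dist (f i) y) :
    ∃ s : V, s ∉ Set.range f ∧ (∃ w ∈ S, G.dist s w ≤ 2) ∧
      G.dist s x ≠ G.dist s y := by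
  by_contra hcon
  push Not at hcon
  have hcl : G.IsNearClosed S x y := by
    intro s hs hnear
    by_contra hsS
    exact hs (hcon s (by rintro ⟨i, rfl⟩; exact hsS (hfS i)) hnear)
  let i₀ : Fin k := ⟨0, by omega⟩
  have hxS : x ∈ S := (hcl.isNear_iff_mem hG hxy (hfd i₀)).mp ⟨f i₀, hfS i₀, by simp⟩
  obtain ⟨u, hu, hur⟩ := exists_mem_filter_notMem_range f _ (hκ x y hxy)
  exact hu (hcon u hur ((hcl.isNear_iff_mem hG hxy hu).mpr hxS))

theorem stmt14 {V : Type*} [Fintype V] (G : SimpleGraph V) (hG : G.Connected)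
    (k : ℕ) (hk : 2 ≤ k)
    (hκ : ∀ x y : V, x ≠ y →
      k + 1 ≤ (Finset.univ.filter (fun s : V => G.dist s x ≠ G.dist s y)).card)
    (S : Finset V) (hS : IsKResolving G k S)
    (x y : V) (hxy : x ≠ y)
    (f : Fin k → V) (hf : Injective f) (hfS : ∀ i, f i ∈ S)
    (hfd : ∀ i, G.dist (f i) x ≠ G.dist (f i) y) :
    ∃ s : V, s ∉ Set.range f ∧ (∃ w ∈ S, G.dist s w ≤ 2) ∧
      G.dist s x ≠ G.dist s y :=
  stmt14_general G hG k hk hκ S x y hxy f hfS hfd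
end

section
/- Let S be a resolving set of a connected graph G. Then for each vertex v ∈ S and each integer d ≥ 1, the number of vertices of G at distance at most d from v is at most 1 + d·(2d+1)^{|S|−1}. -/
open SimpleGraph Function
open scoped Classical

/-!
A vertex `u ≠ v` of the ball of radius `d` around `v ∈ S` is determined by its distances to `S`,
hence by `d(v, u) ∈ [1, d]` together with the shifts `d(s, u) - d(s, v) ∈ [-d, d]` for
`s ∈ S \ {v}`; the triangle inequality bounds the shifts. This gives at most
`d (2d + 1)^(|S| - 1)` such vertices.
-/

open Finset

namespace SimpleGraph

variable {V : Type*} {G : SimpleGraph V}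

theorem Connected.abs_sub_dist_le (hG : G.Connected) (s u v : V) :
    |(G.dist s u : ℤ) - G.dist s v| ≤ G.dist u v := by
  have h₁ : G.dist s u ≤ G.dist s v + G.dist v u := hG.dist_triangle
  have h₂ : G.dist s v ≤ G.dist s u + G.dist u v := hG.dist_triangle
  rw [dist_comm (u := v)] at h₁
  rw [abs_le]
  constructor <;> omega

theorem Connected.sub_dist_mem_pi_Icc_ite [DecidableEq V] (hG : G.Connected) {S : Finset V}
    {u v : V} {d : ℕ} (huv : u ≠ v) (hd : G.dist v u ≤ d) :
    (fun s (_ : s ∈ S) => (G.dist s u : ℤ) - G.dist s v) ∈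
      S.pi fun s => if s = v then Icc (1 : ℤ) d else Icc (-d : ℤ) d := by
  refine mem_pi.mpr fun s _ => ?_
  split_ifs with hsv
  · subst hsv
    have := hG.pos_dist_of_ne huv.symm
    simp only [dist_self, mem_Icc]
    omega
  · have := hG.abs_sub_dist_le s u v
    rw [dist_comm] at hd
    rw [abs_le] at this
    rw [mem_Icc]
    omega

end SimpleGraph

theorem IsResolving.eq_of_forall_dist_eq {V : Type*} {G : SimpleGraph V} {S : Set V}
    (hS : IsResolving G S) {x y : V} (h : ∀ s ∈ S, G.dist s x = G.dist s y) : x = y := by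
  by_contra hxy
  obtain ⟨s, hs, hne⟩ := hS x y hxy
  exact hne (h s hs)

theorem card_pi_Icc_ite {V : Type*} {S : Finset V} {v : V} (hv : v ∈ S) (d : ℕ) :
    #(S.pi fun s => if s = v then Icc (1 : ℤ) d else Icc (-d : ℤ) d) =
      d * (2 * d + 1) ^ (#S - 1) := by
  rw [card_pi, ← mul_prod_erase S _ hv, if_pos rfl, Int.card_Icc,
    prod_congr rfl fun s hs => by rw [if_neg (ne_of_mem_erase hs), Int.card_Icc],
    prod_const, card_erase_of_mem hv]
  congr 2 <;> omega

theorem stmt15_general {V : Type*} [Fintype V] (G : SimpleGraph V) (hG : G.Connected)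
    (S : Finset V) (hS : IsResolving G ↑S) (v : V) (hv : v ∈ S)
    (d : ℕ) :
    (Finset.univ.filter (fun u : V => G.dist v u ≤ d)).card ≤
      1 + d * (2 * d + 1) ^ (S.card - 1) := by
  set ball := univ.filter fun u : V => G.dist v u ≤ d
  let shift : V → ∀ s ∈ S, ℤ := fun u s _ => (G.dist s u : ℤ) - G.dist s v
  have hmaps : ∀ u ∈ ball.erase v,
      shift u ∈ S.pi fun s => if s = v then Icc (1 : ℤ) d else Icc (-d : ℤ) d := fun u hu =>
    hG.sub_dist_mem_pi_Icc_ite (ne_of_mem_erase hu) (mem_filter.mp (mem_of_mem_erase hu)).2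
  have hinj : Set.InjOn shift (ball.erase v) := fun x _ y _ hxy =>
    hS.eq_of_forall_dist_eq fun s hs => by
      have := congr_fun₂ hxy s hs
      simp only [shift, sub_left_inj, Nat.cast_inj] at this
      exact this
  calc #ball = #(ball.erase v) + 1 :=
        (card_erase_add_one (mem_filter.mpr ⟨mem_univ v, by simp⟩)).symm
    _ ≤ d * (2 * d + 1) ^ (#S - 1) + 1 := by
        rw [← card_pi_Icc_ite hv d]
        exact Nat.add_le_add_right (card_le_card_of_injOn shift hmaps hinj) 1
    _ = _ := add_comm _ _

theorem stmt15 {V : Type*} [Fintype V] (G : SimpleGraph V) (hG : G.Connected)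
    (S : Finset V) (hS : IsResolving G ↑S) (v : V) (hv : v ∈ S)
    (d : ℕ) (hd : 1 ≤ d) :
    (Finset.univ.filter (fun u : V => G.dist v u ≤ d)).card ≤
      1 + d * (2 * d + 1) ^ (S.card - 1) :=
  stmt15_general G hG S hS v hv d
end

section
/- Let k ≥ 2 and let G be a graph with κ(G) ≥ k+1. Then dim_{k+1}(G) ≤ dim_k(G)·(1 + 2·5^{dim_k(G)−1}). -/
open SimpleGraph Function
open scoped Classical

/-!
Take a minimum `k`-resolving set `S` and let `S'` be the union of the balls of radius `2` around
its vertices. Each ball has at most `1 + 2 * 5 ^ (|S| - 1)` vertices, since a vertex of it is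
determined by its distances to `S`, which are within `2` of those of the centre.

`S'` is `(k + 1)`-resolving. Otherwise, for some pair `x, y`, the vertices of `S'` resolving it are
those of `S`, so every resolving vertex within distance `2` of `S` lies in `S`; and since the whole
vertex set is `(k + 1)`-resolving, some resolving vertex `w` lies outside `S'`. Moving along
geodesics towards `x` keeps a vertex closer to `x` than to `y`, so from `w` (closer to `x`, say) the
far-from-`S` region reaches `x`, and from a vertex of `S` resolving `x, y` the set `S` reaches `y`.
On a geodesic from `y` to `x`, the last vertex of `S` is followed by the midpoint and then by a
resolving vertex within distance `2` of `S`, a contradiction.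
-/

namespace SimpleGraph

variable {V : Type*} {G : SimpleGraph V}

lemma Connected.exists_adj_dist_add_one_eq (hG : G.Connected) {v x : V} (hvx : v ≠ x) :
    ∃ u, G.Adj v u ∧ G.dist u x + 1 = G.dist v x := by
  obtain ⟨p, hp⟩ := hG.exists_walk_length_eq_dist v x
  cases p with
  | nil => exact absurd rfl hvx
  | @cons _ u _ hadj q =>
    refine ⟨u, hadj, le_antisymm ?_ ?_⟩
    · simpa [← hp] using dist_le q
    · have : G.dist v x ≤ G.dist v u + G.dist u x := hG.dist_triangle
      rw [dist_eq_one_iff_adj.mpr hadj] at this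
      omega

lemma Connected.exists_adj_of_dist_add_dist_eq (hG : G.Connected) {x y v : V}
    (hv : G.dist y v + G.dist v x = G.dist y x) (hvx : v ≠ x) :
    ∃ u, G.Adj v u ∧ G.dist u x + 1 = G.dist v x ∧ G.dist y u = G.dist y v + 1 := by
  obtain ⟨u, hadj, hu⟩ := hG.exists_adj_dist_add_one_eq hvx
  refine ⟨u, hadj, hu, le_antisymm ?_ ?_⟩
  · simpa [dist_eq_one_iff_adj.mpr hadj] using
      (hG.dist_triangle : G.dist y u ≤ G.dist y v + G.dist v u)
  · have : G.dist y x ≤ G.dist y u + G.dist u x := hG.dist_triangle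
    omega

end SimpleGraph

section Resolving

variable {V : Type*} {G : SimpleGraph V} {x y : V}

lemma mem_of_dist_lt_of_adj_closed (hG : G.Connected) {T : Set V}
    (hT : ∀ ⦃v u⦄, v ∈ T → G.Adj v u → G.dist u x ≠ G.dist u y → u ∈ T)
    {v : V} (hv : v ∈ T) (hlt : G.dist v x < G.dist v y) : x ∈ T := by
  induction hn : G.dist v x generalizing v with
  | zero => rwa [← hG.dist_eq_zero_iff.mp hn]
  | succ n ih =>
    obtain ⟨u, hadj, hu⟩ := hG.exists_adj_dist_add_one_eq (v := v) (x := x) (by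
      rintro rfl; simp at hn)
    have hvu : G.dist v y ≤ G.dist v u + G.dist u y := hG.dist_triangle
    rw [dist_eq_one_iff_adj.mpr hadj] at hvu
    have hult : G.dist u x < G.dist u y := by omega
    exact ih (hT hv hadj hult.ne) hult (by omega)

variable {S : Set V}

lemma exists_dist_le_two_of_mem (hG : G.Connected)
    (hS : ∀ v, G.dist v x ≠ G.dist v y → (∃ s ∈ S, G.dist v s ≤ 2) → v ∈ S) (hy : y ∈ S) :
    ∃ s ∈ S, G.dist x s ≤ 2 := by
  by_contra! hfar
  have hxS : x ∉ S := fun hx => by simpa using hfar x hx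
  suffices ∀ n, ∀ v ∈ S, G.dist y v + G.dist v x = G.dist y x → G.dist v x ≠ n from
    this _ y hy (by simp) rfl
  intro n
  induction n using Nat.strong_induction_on with
  | _ n ih =>
  rintro v hv hgeo rfl
  obtain ⟨u, hvu, hux, hyu⟩ :=
    hG.exists_adj_of_dist_add_dist_eq hgeo (ne_of_mem_of_not_mem hv hxS)
  have hugeo : G.dist y u + G.dist u x = G.dist y x := by omega
  have huv : G.dist u v ≤ 1 := (dist_eq_one_iff_adj.mpr hvu.symm).le
  by_cases hres : G.dist u x ≠ G.dist u y
  · exact ih _ (by omega) u (hS u hres ⟨v, hv, by omega⟩) hugeo rfl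
  · rw [not_ne_iff, dist_comm (u := u) (v := y)] at hres
    obtain ⟨w, huw, hwx, hyw⟩ := hG.exists_adj_of_dist_add_dist_eq hugeo (by
      rintro rfl; simp at hres; omega)
    have hwv : G.dist w v ≤ G.dist w u + G.dist u v := hG.dist_triangle
    rw [dist_eq_one_iff_adj.mpr huw.symm] at hwv
    have hwres : G.dist w x ≠ G.dist w y := by rw [dist_comm (u := w) (v := y)]; omega
    exact ih _ (by omega) w (hS w hwres ⟨v, hv, by omega⟩) (by omega) rfl

lemma exists_dist_le_two_of_dist_ne (hG : G.Connected)
    (hS : ∀ v, G.dist v x ≠ G.dist v y → (∃ s ∈ S, G.dist v s ≤ 2) → v ∈ S)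
    (hSxy : ∃ s ∈ S, G.dist s x ≠ G.dist s y) {w : V} (hw : G.dist w x ≠ G.dist w y) :
    ∃ s ∈ S, G.dist w s ≤ 2 := by
  wlog hlt : G.dist w x < G.dist w y generalizing x y
  · exact this (fun v hv => hS v hv.symm) (by simpa [eq_comm] using hSxy) hw.symm
      (by omega)
  by_contra! hwfar
  have hfar_closed : ∀ ⦃v u⦄, v ∈ {v | ∀ s ∈ S, 2 < G.dist v s} → G.Adj v u →
      G.dist u x ≠ G.dist u y → u ∈ {v | ∀ s ∈ S, 2 < G.dist v s} := by
    intro v u hv hvu hres s hs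
    by_contra! hus
    have := hv u (hS u hres ⟨s, hs, hus⟩)
    rw [dist_eq_one_iff_adj.mpr hvu] at this
    omega
  have hS_closed : ∀ ⦃v u⦄, v ∈ S → G.Adj v u → G.dist u x ≠ G.dist u y → u ∈ S :=
    fun v u hv hvu hres => hS u hres ⟨v, hv, by simp [dist_eq_one_iff_adj.mpr hvu.symm]⟩
  have hxfar : ∀ s ∈ S, 2 < G.dist x s := mem_of_dist_lt_of_adj_closed hG hfar_closed hwfar hlt
  obtain ⟨s, hs, hsxy⟩ := hSxy
  rcases hsxy.lt_or_gt with hsx | hsy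
  · simpa using hxfar x (mem_of_dist_lt_of_adj_closed hG hS_closed hs hsx)
  · have hy : y ∈ S := mem_of_dist_lt_of_adj_closed hG
      (fun v u hv hvu hres => hS_closed hv hvu hres.symm) hs hsy
    obtain ⟨t, ht, hxt⟩ := exists_dist_le_two_of_mem hG hS hy
    exact (hxfar t ht).not_ge hxt

end Resolving

open Finset

namespace IsKResolving

variable {V : Type*} [Fintype V] {G : SimpleGraph V} {k : ℕ} {S : Finset V}

lemma of_le (hS : IsKResolving G k S) {j : ℕ} (hjk : j ≤ k) : IsKResolving G j S :=
  fun x y hxy => hjk.trans (hS x y hxy)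

lemma mono (hS : IsKResolving G k S) {T : Finset V} (hST : S ⊆ T) : IsKResolving G k T :=
  fun x y hxy => (hS x y hxy).trans (card_le_card (filter_subset_filter _ hST))

lemma isResolving (hS : IsKResolving G k S) (hk : 1 ≤ k) : IsResolving G S := by
  intro x y hxy
  obtain ⟨s, hs⟩ := card_pos.mp (hk.trans (hS x y hxy))
  exact ⟨s, (mem_filter.mp hs).1, (mem_filter.mp hs).2⟩

end IsKResolving

namespace SimpleGraph

variable {V : Type*} [Fintype V] (G : SimpleGraph V)

noncomputable def closedBall (s : V) (r : ℕ) : Finset V := univ.filter fun u => G.dist u s ≤ r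

variable {G}

/-- A vertex `u ≠ s` of the ball is determined by its distance vector to the resolving set `S`,
whose `s`-entry lies in `[1, r]` and whose `t`-entry lies in `[d(t, s) - r, d(t, s) + r]`. -/
lemma card_closedBall_le (hG : G.Connected) {S : Finset V} (hS : IsResolving G S) {s : V}
    (hs : s ∈ S) (r : ℕ) : #(G.closedBall s r) ≤ 1 + r * (2 * r + 1) ^ (#S - 1) := by
  set A := univ.filter fun u => 1 ≤ G.dist u s ∧ G.dist u s ≤ r
  set codes := Icc 1 r ×ˢ (S.erase s).pi fun t => Icc (G.dist t s - r) (G.dist t s + r)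
  have hball : G.closedBall s r ⊆ insert s A := by
    intro u hu
    rw [closedBall, mem_filter] at hu
    rcases Nat.eq_zero_or_pos (G.dist u s) with h0 | hpos
    · exact mem_insert.mpr (Or.inl (hG.dist_eq_zero_iff.mp h0))
    · exact mem_insert_of_mem (mem_filter.mpr ⟨mem_univ _, hpos, hu.2⟩)
  have hA : #A ≤ #codes := by
    refine card_le_card_of_injOn (fun u => (G.dist u s, fun t _ => G.dist t u)) ?_ ?_
    · intro u hu
      obtain ⟨-, h1, h2⟩ := mem_filter.mp hu
      refine mem_product.mpr ⟨mem_Icc.mpr ⟨h1, h2⟩, mem_pi.mpr fun t _ => mem_Icc.mpr ?_⟩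
      have htu : G.dist t u ≤ G.dist t s + G.dist s u := hG.dist_triangle
      have hts : G.dist t s ≤ G.dist t u + G.dist u s := hG.dist_triangle
      rw [dist_comm (u := s)] at htu
      show G.dist t s - r ≤ G.dist t u ∧ G.dist t u ≤ G.dist t s + r
      constructor <;> omega
    · intro u _ u' _ huu'
      by_contra hne
      obtain ⟨t, ht, htuu'⟩ := hS u u' hne
      have hs_eq : G.dist u s = G.dist u' s := congrArg Prod.fst huu'
      by_cases hts : t = s
      · subst hts
        exact htuu' (by rw [dist_comm, hs_eq, dist_comm])
      · exact htuu' (congrFun (congrFun (congrArg Prod.snd huu') t) (mem_erase.mpr ⟨hts, ht⟩))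
  have hcodes : #codes ≤ r * (2 * r + 1) ^ (#S - 1) := by
    rw [card_product, card_pi, Nat.card_Icc, Nat.add_sub_cancel, ← card_erase_of_mem hs]
    gcongr
    refine prod_le_pow_card _ _ _ fun t _ => ?_
    rw [Nat.card_Icc]
    omega
  calc #(G.closedBall s r) ≤ #(insert s A) := card_le_card hball
    _ ≤ #A + 1 := card_insert_le _ _
    _ ≤ 1 + r * (2 * r + 1) ^ (#S - 1) := by omega

lemma isKResolving_biUnion_closedBall (hG : G.Connected) {k : ℕ} (hk : 1 ≤ k) {S : Finset V}
    (hS : IsKResolving G k S) (huniv : IsKResolving G (k + 1) univ) :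
    IsKResolving G (k + 1) (S.biUnion fun s => G.closedBall s 2) := by
  intro x y hxy
  set S' := S.biUnion fun s => G.closedBall s 2
  have hmem : ∀ {v}, v ∈ S' ↔ ∃ s ∈ S, G.dist v s ≤ 2 := by simp [S', closedBall]
  by_contra! hlt
  have hsame : S.filter (fun v => G.dist v x ≠ G.dist v y) =
      S'.filter (fun v => G.dist v x ≠ G.dist v y) :=
    eq_of_subset_of_card_le (filter_subset_filter _ fun s hs => hmem.mpr ⟨s, hs, by simp⟩)
      ((Nat.le_of_lt_succ hlt).trans (hS x y hxy))
  have hS_closed : ∀ v, G.dist v x ≠ G.dist v y → (∃ s ∈ S, G.dist v s ≤ 2) → v ∈ S := by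
    intro v hres hnear
    have : v ∈ S'.filter (fun v => G.dist v x ≠ G.dist v y) :=
      mem_filter.mpr ⟨hmem.mpr hnear, hres⟩
    exact (mem_filter.mp (hsame ▸ this)).1
  have hall : univ.filter (fun v => G.dist v x ≠ G.dist v y) ⊆
      S'.filter (fun v => G.dist v x ≠ G.dist v y) := by
    intro w hw
    rw [mem_filter] at hw ⊢
    exact ⟨hmem.mpr (exists_dist_le_two_of_dist_ne hG hS_closed
      (hS.isResolving hk x y hxy) hw.2), hw.2⟩
  exact (huniv x y hxy).not_gt (hlt.trans_le' (card_le_card hall))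

end SimpleGraph

theorem stmt16 {V : Type*} [Fintype V] (G : SimpleGraph V) (hG : G.Connected)
    (k : ℕ) (hk : 2 ≤ k)
    (hκ : ∃ S : Finset V, IsKResolving G (k + 1) S) :
    kMetricDim G (k + 1) ≤
      kMetricDim G k * (1 + 2 * 5 ^ (kMetricDim G k - 1)) := by
  obtain ⟨S₀, hS₀⟩ := hκ
  obtain ⟨S, hS, hcard⟩ : kMetricDim G k ∈ {n | ∃ S : Finset V, IsKResolving G k S ∧ #S = n} :=
    Nat.sInf_mem ⟨_, S₀, hS₀.of_le k.le_succ, rfl⟩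
  have hk1 : 1 ≤ k := by omega
  calc kMetricDim G (k + 1) ≤ #(S.biUnion fun s => G.closedBall s 2) :=
        Nat.sInf_le ⟨_, G.isKResolving_biUnion_closedBall hG hk1 hS (hS₀.mono (subset_univ _)),
          rfl⟩
    _ ≤ ∑ s ∈ S, #(G.closedBall s 2) := card_biUnion_le
    _ ≤ #S * (1 + 2 * 5 ^ (#S - 1)) := by
        simpa using sum_le_card_nsmul S _ _ fun s hs =>
          G.card_closedBall_le hG (hS.isResolving hk1) hs 2
    _ = kMetricDim G k * (1 + 2 * 5 ^ (kMetricDim G k - 1)) := by rw [hcard]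
end

section
/- For the path P_n on n vertices with n ≥ k + 2: dim_k(P_n) = k if k ≤ 2, and dim_k(P_n) = k + 1 if k ≥ 3. -/
open SimpleGraph Function
open scoped Classical

private lemma pg_walk_ge {n : ℕ} {u v : Fin n} (w : (SimpleGraph.pathGraph n).Walk u v) :
    u.val - v.val + (v.val - u.val) ≤ w.length := by
  induction w with
  | nil => omega
  | @cons a b c h p ih =>
    rw [SimpleGraph.pathGraph_adj] at h
    simp only [SimpleGraph.Walk.length_cons]
    omega

private lemma pg_walk_exists {n : ℕ} :
    ∀ (d a : ℕ) (ha : a + d < n),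
    ∃ w : (SimpleGraph.pathGraph n).Walk ⟨a, by omega⟩ ⟨a + d, ha⟩, w.length = d := by
  intro d
  induction d with
  | zero => intro a ha; exact ⟨SimpleGraph.Walk.nil, rfl⟩
  | succ d ih =>
    intro a ha
    obtain ⟨w, hw⟩ := ih a (by omega)
    have hadj : (SimpleGraph.pathGraph n).Adj ⟨a + d, by omega⟩ ⟨a + (d + 1), ha⟩ := by
      rw [SimpleGraph.pathGraph_adj]; left; rfl
    exact ⟨w.concat hadj, by rw [SimpleGraph.Walk.length_concat, hw]⟩

private lemma pg_dist {n : ℕ} (u v : Fin n) :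
    (SimpleGraph.pathGraph n).dist u v = u.val - v.val + (v.val - u.val) := by
  have hu := u.isLt
  have hv := v.isLt
  apply le_antisymm
  · rcases le_total u.val v.val with h | h
    · have hlt : u.val + (v.val - u.val) < n := by omega
      obtain ⟨w, hw⟩ := pg_walk_exists (v.val - u.val) u.val hlt
      have h1 := SimpleGraph.dist_le w
      rw [hw] at h1
      have he : (⟨u.val + (v.val - u.val), hlt⟩ : Fin n) = v := Fin.ext (Nat.add_sub_cancel' h)
      rw [← he]
      exact le_trans h1 (by omega)
    · have hlt : v.val + (u.val - v.val) < n := by omega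
      obtain ⟨w, hw⟩ := pg_walk_exists (u.val - v.val) v.val hlt
      have h1 := SimpleGraph.dist_le w
      rw [hw] at h1
      have he : (⟨v.val + (u.val - v.val), hlt⟩ : Fin n) = u := Fin.ext (Nat.add_sub_cancel' h)
      rw [SimpleGraph.dist_comm, ← he]
      exact le_trans h1 (by omega)
  · obtain ⟨m, rfl⟩ : ∃ m, n = m + 1 := ⟨n - 1, by omega⟩
    obtain ⟨w, hw⟩ :=
      ((SimpleGraph.pathGraph_connected m).preconnected u v).exists_walk_length_eq_dist
    have := pg_walk_ge w
    omega


private lemma pg_resolving_of_card {n k : ℕ} (S : Finset (Fin n)) (hS : k + 1 ≤ S.card) :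
    IsKResolving (SimpleGraph.pathGraph n) k S := by
  intro x y hxy
  have hxy' : x.val ≠ y.val := fun h => hxy (Fin.ext h)
  have hsub : (S.filter (fun s =>
      ¬ ((SimpleGraph.pathGraph n).dist s x ≠ (SimpleGraph.pathGraph n).dist s y))).card ≤ 1 := by
    apply Finset.card_le_one.2
    intro a ha b hb
    simp only [Finset.mem_filter, not_not] at ha hb
    have ha' := ha.2
    have hb' := hb.2
    rw [pg_dist, pg_dist] at ha' hb'
    exact Fin.ext (by omega)
  have htot := Finset.card_filter_add_card_filter_not
    (s := S) (p := fun s => (SimpleGraph.pathGraph n).dist s x ≠ (SimpleGraph.pathGraph n).dist s y)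
  omega

theorem stmt17 (n k : ℕ) (hk : 1 ≤ k) (hn : k + 2 ≤ n) :
    kMetricDim (SimpleGraph.pathGraph n) k = if k ≤ 2 then k else k + 1 := by
  have h0 : (0 : ℕ) < n := by omega
  have h1 : (1 : ℕ) < n := by omega
  have hn1 : n - 1 < n := by omega
  set m := if k ≤ 2 then k else k + 1 with hm
  have hmem : m ∈ {n0 | ∃ S : Finset (Fin n),
      IsKResolving (SimpleGraph.pathGraph n) k S ∧ S.card = n0} := by
    by_cases hk2 : k ≤ 2
    · rw [hm, if_pos hk2]
      interval_cases k
      · -- k = 1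
        refine ⟨{⟨0, h0⟩}, ?_, Finset.card_singleton _⟩
        intro x y hxy
        have hxy' : x.val ≠ y.val := fun h => hxy (Fin.ext h)
        have hmem0 : (⟨0, h0⟩ : Fin n) ∈ ({⟨0, h0⟩} : Finset (Fin n)).filter
            (fun s => (SimpleGraph.pathGraph n).dist s x ≠ (SimpleGraph.pathGraph n).dist s y) := by
          rw [Finset.mem_filter]
          refine ⟨Finset.mem_singleton_self _, ?_⟩
          rw [pg_dist, pg_dist]
          simp only []
          omega
        exact Finset.card_pos.2 ⟨_, hmem0⟩ 
      · -- k = 2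
        have hne : (⟨0, h0⟩ : Fin n) ≠ ⟨n - 1, hn1⟩ := by
          intro h
          have := congrArg Fin.val h
          simp only [] at this
          omega
        refine ⟨{⟨0, h0⟩, ⟨n - 1, hn1⟩}, ?_, by rw [Finset.card_pair hne]⟩
        intro x y hxy
        have hxy' : x.val ≠ y.val := fun h => hxy (Fin.ext h)
        have hx := x.isLt
        have hy := y.isLt
        have heq : ({⟨0, h0⟩, ⟨n - 1, hn1⟩} : Finset (Fin n)).filter
            (fun s => (SimpleGraph.pathGraph n).dist s x ≠ (SimpleGraph.pathGraph n).dist s y)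
            = {⟨0, h0⟩, ⟨n - 1, hn1⟩} := by
          apply Finset.filter_eq_self.2
          intro s hs
          rcases Finset.mem_insert.1 hs with h | h
          · subst h; rw [pg_dist, pg_dist]; simp only []; omega
          · rw [Finset.mem_singleton] at h
            subst h; rw [pg_dist, pg_dist]; simp only []; omega
        rw [heq, Finset.card_pair hne]
    · rw [hm, if_neg hk2]
      have hcard : k + 1 ≤ (Finset.univ : Finset (Fin n)).card := by
        rw [Finset.card_univ, Fintype.card_fin]; omega
      obtain ⟨S, _, hS⟩ := Finset.exists_subset_card_eq hcard
      exact ⟨S, pg_resolving_of_card S (by omega), hS⟩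
  have hlb : ∀ b ∈ {n0 | ∃ S : Finset (Fin n),
      IsKResolving (SimpleGraph.pathGraph n) k S ∧ S.card = n0}, m ≤ b := by
    rintro b ⟨S, hS, rfl⟩
    have hxy01 : (⟨0, h0⟩ : Fin n) ≠ ⟨1, h1⟩ := by
      intro h; have := congrArg Fin.val h; simp only [] at this; omega
    have hkS : k ≤ S.card :=
      le_trans (hS _ _ hxy01) (Finset.card_le_card (Finset.filter_subset _ _))
    by_cases hk2 : k ≤ 2
    · rw [hm, if_pos hk2]; exact hkS
    · rw [hm, if_neg hk2]
      by_contra hcon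
      have hSk : S.card = k := by omega
      have hall : ∀ s ∈ S, ∀ x y : Fin n, x ≠ y →
          (SimpleGraph.pathGraph n).dist s x ≠ (SimpleGraph.pathGraph n).dist s y := by
        intro s hs x y hxy
        have h1' := hS x y hxy
        have h2 : S.filter (fun s => (SimpleGraph.pathGraph n).dist s x ≠
            (SimpleGraph.pathGraph n).dist s y) = S :=
          Finset.eq_of_subset_of_card_le (Finset.filter_subset _ _) (by omega)
        have : s ∈ S.filter (fun s => (SimpleGraph.pathGraph n).dist s x ≠
            (SimpleGraph.pathGraph n).dist s y) := by rw [h2]; exact hs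
        exact (Finset.mem_filter.1 this).2
      have hends : ∀ s ∈ S, s.val = 0 ∨ s.val = n - 1 := by
        intro s hs
        by_contra hcon2
        push_neg at hcon2
        have hsl := s.isLt
        have hb1 : 1 ≤ s.val := by omega
        have hb2 : s.val + 1 < n := by omega
        set x : Fin n := ⟨s.val - 1, by omega⟩ with hxdef
        set y : Fin n := ⟨s.val + 1, hb2⟩ with hydef
        have hxy : x ≠ y := by
          intro h; have := congrArg Fin.val h
          rw [hxdef, hydef] at this; simp only [] at this; omega
        apply hall s hs x y hxy
        rw [pg_dist, pg_dist, hxdef, hydef]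
        simp only []
        omega
      have hsub2 : S ⊆ {⟨0, h0⟩, ⟨n - 1, hn1⟩} := by
        intro s hs
        rcases hends s hs with h | h
        · exact Finset.mem_insert.2 (Or.inl (Fin.ext h))
        · exact Finset.mem_insert.2 (Or.inr (Finset.mem_singleton.2 (Fin.ext h)))
      have hle2 : S.card ≤ 2 :=
        le_trans (Finset.card_le_card hsub2) (le_trans (Finset.card_insert_le _ _) (by simp))
      omega
  rw [kMetricDim]
  exact le_antisymm (Nat.sInf_le hmem) (le_csInf ⟨m, hmem⟩ hlb)
end

section
/- For every k ≥ 2 and every sufficiently large t, the graph M_{t,k} satisfies dim_k(M_{t,k}) = kt. -/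
open SimpleGraph Function
open scoped Classical

/-- The graph `M_{t,k}`: a clique on all binary strings of length `t`, together with the
vertices `v_{i,j}` of `K_t □ K_k` (adjacent iff they agree in exactly one coordinate),
where `v_{i,j}` is adjacent to exactly those strings having `1` at coordinate `i`. -/
def Mtk (t k : ℕ) : SimpleGraph ((Fin t → Bool) ⊕ (Fin t × Fin k)) where
  Adj x y :=
    match x, y with
    | Sum.inl u, Sum.inl v => u ≠ v
    | Sum.inl u, Sum.inr p => u p.1 = true
    | Sum.inr p, Sum.inl u => u p.1 = true
    | Sum.inr p, Sum.inr q => (p.1 = q.1 ∧ p.2 ≠ q.2) ∨ (p.1 ≠ q.1 ∧ p.2 = q.2)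
  symm := by
    constructor
    rintro (u | p) (v | q) h
    · exact h.symm
    · exact h
    · exact h
    · rcases h with ⟨h1, h2⟩ | ⟨h1, h2⟩
      · exact Or.inl ⟨h1.symm, h2.symm⟩
      · exact Or.inr ⟨h1.symm, h2.symm⟩
  loopless := by
    constructor
    rintro (u | p) h
    · exact h rfl
    · rcases h with ⟨_, h2⟩ | ⟨h1, _⟩
      · exact h2 rfl
      · exact h1 rfl

/-! The all-ones string is a universal vertex, so `M_{t,k}` has diameter two and a vertex `s`
distinguishes `x ≠ y` exactly when `s ∈ {x, y}` or `s` is adjacent to just one of them.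

The `kt` vertices of `K_t □ K_k` form a `k`-resolving set: every pair is distinguished by some
vertex in each of the `t ≥ k` rows, or by some vertex in each of the `k` columns. Conversely, let
`S` be `k`-resolving. If every row `{v_{i,j}}_j` meets `S` in at least `k` vertices, then
`|S| ≥ kt`. Otherwise some row `i` meets `S` in fewer than `k` vertices; two strings differing
only at coordinate `i` are distinguished by nothing but themselves and row `i`, so `S` contains a
string from each of these `2^{t-1}` pairs and `|S| ≥ 2^{t-1} ≥ kt`. -/

namespace SimpleGraph

variable {V : Type*} {G : SimpleGraph V} {s v x y : V}

lemma dist_eq_ite_of_ediam_le_two (hG : G.ediam ≤ 2) :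
    G.dist x y = if x = y then 0 else if G.Adj x y then 1 else 2 := by
  split_ifs with hxy hadj
  · simp [hxy]
  · exact dist_eq_one_iff_adj.mpr hadj
  · have hle : G.edist x y ≤ 2 := edist_le_ediam.trans hG
    have hreach : G.Reachable x y :=
      reachable_of_edist_ne_top (ne_top_of_le_ne_top (by simp) hle)
    have hpos : G.dist x y ≠ 0 := dist_ne_zero_iff_ne_and_reachable.mpr ⟨hxy, hreach⟩
    have hone : G.dist x y ≠ 1 := fun h => hadj (dist_eq_one_iff_adj.mp h)
    have htwo : G.dist x y ≤ 2 := by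
      rw [← hreach.coe_dist_eq_edist] at hle
      exact_mod_cast hle
    omega

lemma IsUniversal.ediam_le_two (hv : G.IsUniversal v) : G.ediam ≤ 2 := by
  calc G.ediam ≤ 2 * G.eccent v := ediam_le_two_mul_eccent v
    _ ≤ 2 * 1 := by gcongr; exact (eccent_le_one_iff v).mpr hv
    _ = 2 := mul_one 2

lemma dist_ne_dist_iff_of_ediam_le_two (hG : G.ediam ≤ 2) (hxy : x ≠ y) :
    G.dist s x ≠ G.dist s y ↔ s = x ∨ s = y ∨ ¬(G.Adj s x ↔ G.Adj s y) := by
  rw [dist_eq_ite_of_ediam_le_two hG, dist_eq_ite_of_ediam_le_two hG]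
  split_ifs <;> simp_all

end SimpleGraph

open Finset

lemma card_le_card_filter_of_forall_exists_fst {α β : Type*} [Fintype α] [Fintype β]
    {P : α × β → Prop} [DecidablePred P] (h : ∀ a, ∃ b, P (a, b)) :
    Fintype.card α ≤ #(univ.filter P) := by
  refine card_le_card_of_surjOn Prod.fst fun a _ => ?_
  obtain ⟨b, hb⟩ := h a
  exact ⟨(a, b), by simpa using hb, rfl⟩

lemma card_le_card_filter_of_forall_exists_snd {α β : Type*} [Fintype α] [Fintype β]
    {P : α × β → Prop} [DecidablePred P] (h : ∀ b, ∃ a, P (a, b)) :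
    Fintype.card β ≤ #(univ.filter P) := by
  refine card_le_card_of_surjOn Prod.snd fun b _ => ?_
  obtain ⟨a, ha⟩ := h b
  exact ⟨(a, b), by simpa using ha, rfl⟩

lemma card_filter_apply_eq_false {ι : Type*} [Fintype ι] [DecidableEq ι] (i : ι) :
    #(univ.filter fun u : ι → Bool => u i = false) = 2 ^ (Fintype.card ι - 1) := by
  have h := Fintype.card_filter_piFinset_const_eq_of_mem (univ : Finset Bool) i (mem_univ false)
  rw [Fintype.piFinset_univ] at h
  simpa using h

lemma mul_card_le_card_of_forall_le_card_filter_fst {α β : Type*} [Fintype α] [DecidableEq α]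
    {n : ℕ} {T : Finset (α × β)} (h : ∀ a, n ≤ #(T.filter (·.1 = a))) : n * Fintype.card α ≤ #T :=
  calc n * Fintype.card α = ∑ _a : α, n := by simp [mul_comm]
    _ ≤ ∑ a, #(T.filter (·.1 = a)) := sum_le_sum fun a _ => h a
    _ = #T := (card_eq_sum_card_fiberwise fun _ _ => mem_univ _).symm

lemma kMetricDim_eq_of_isKResolving {V : Type*} [Fintype V] {G : SimpleGraph V} {k : ℕ}
    {S : Finset V} (hS : IsKResolving G k S) (hmin : ∀ T, IsKResolving G k T → #S ≤ #T) :
    kMetricDim G k = #S :=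
  le_antisymm (Nat.sInf_le ⟨S, hS, rfl⟩)
    (le_csInf ⟨_, S, hS, rfl⟩ fun _ ⟨T, hT, hn⟩ => hn ▸ hmin T hT)

namespace Mtk

variable {t k : ℕ}

@[simp] lemma adj_inl_inl {u v : Fin t → Bool} :
    (Mtk t k).Adj (.inl u) (.inl v) ↔ u ≠ v := Iff.rfl

@[simp] lemma adj_inr_inl {u : Fin t → Bool} {p : Fin t × Fin k} :
    (Mtk t k).Adj (.inr p) (.inl u) ↔ u p.1 = true := Iff.rfl

@[simp] lemma adj_inr_inr {p q : Fin t × Fin k} :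
    (Mtk t k).Adj (.inr p) (.inr q) ↔ (p.1 = q.1 ∧ p.2 ≠ q.2) ∨ (p.1 ≠ q.1 ∧ p.2 = q.2) :=
  Iff.rfl

lemma isUniversal_inl_const_true : (Mtk t k).IsUniversal (.inl fun _ => true) := by
  rintro (u | p) hu
  · exact fun h => hu (congrArg _ h)
  · rfl

lemma dist_ne_dist_iff {s x y : (Fin t → Bool) ⊕ (Fin t × Fin k)} (hxy : x ≠ y) :
    (Mtk t k).dist s x ≠ (Mtk t k).dist s y ↔
      s = x ∨ s = y ∨ ¬((Mtk t k).Adj s x ↔ (Mtk t k).Adj s y) :=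
  SimpleGraph.dist_ne_dist_iff_of_ediam_le_two isUniversal_inl_const_true.ediam_le_two hxy

lemma isKResolving_inr (hk : 2 ≤ k) (hkt : k ≤ t) :
    IsKResolving (Mtk t k) k (univ.map .inr) := by
  intro x y hxy
  wlog hxy' : ¬(x.isRight ∧ y.isLeft) generalizing x y
  · rw [filter_congr fun s _ => ne_comm]
    exact this y x hxy.symm (by grind)
  simp only [filter_map, card_map, Function.comp_def, dist_ne_dist_iff hxy, Embedding.inr_apply]
  rcases x with u | p <;> rcases y with v | q
  · obtain ⟨i, hi⟩ := Function.ne_iff.mp (show u ≠ v by simpa using hxy)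
    refine (Fintype.card_fin k).ge.trans
      (card_le_card_filter_of_forall_exists_snd fun j => ⟨i, ?_⟩)
    simpa using hi
  · have : Nontrivial (Fin k) := Fin.nontrivial_iff_two_le.mpr hk
    obtain ⟨j', hj'⟩ := exists_ne q.2
    refine (hkt.trans (Fintype.card_fin t).ge).trans
      (card_le_card_filter_of_forall_exists_fst fun a => ?_)
    by_cases ha : a = q.1
    · exact ⟨q.2, by simp [ha]⟩
    by_cases hua : u a = true
    · exact ⟨j', by simp [ha, hua, hj']⟩
    · exact ⟨q.2, by simp [ha, hua]⟩
  · simp at hxy'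
  · by_cases h1 : p.1 = q.1
    · refine (hkt.trans (Fintype.card_fin t).ge).trans
        (card_le_card_filter_of_forall_exists_fst fun a => ⟨p.2, ?_⟩)
      by_cases ha : a = p.1
      · simp [ha]
      · have h2 : p.2 ≠ q.2 := fun h => hxy (by rw [Prod.ext h1 h])
        simp [h1, h2]
    · refine (Fintype.card_fin k).ge.trans (card_le_card_filter_of_forall_exists_snd fun b => ?_)
      by_cases hb : b = q.2
      · exact ⟨q.1, by simp [hb]⟩
      · exact ⟨p.1, by by_cases hbp : b = p.2 <;> simp [hb, hbp, h1]⟩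

lemma inl_mem_or_inl_mem_of_isKResolving {S : Finset ((Fin t → Bool) ⊕ (Fin t × Fin k))}
    (hS : IsKResolving (Mtk t k) k S) {i : Fin t} (hi : #(S.toRight.filter (·.1 = i)) < k)
    {u v : Fin t → Bool} (huv : u ≠ v) (hagree : ∀ a ≠ i, u a = v a) :
    .inl u ∈ S ∨ .inl v ∈ S := by
  by_contra! h
  have hsub : S.filter (fun s => (Mtk t k).dist s (.inl u) ≠ (Mtk t k).dist s (.inl v)) ⊆
      (S.toRight.filter (·.1 = i)).map .inr := by
    intro s hs
    rw [mem_filter, dist_ne_dist_iff (by simpa using huv)] at hs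
    obtain ⟨hsS, hs⟩ := hs
    rcases s with w | p
    · have hwu : w ≠ u := fun h' => h.1 (h' ▸ hsS)
      have hwv : w ≠ v := fun h' => h.2 (h' ▸ hsS)
      simp [hwu, hwv] at hs
    · have hp : p.1 = i := by
        by_contra hp
        simp [hagree p.1 hp] at hs
      simpa [hp] using hsS
  exact (hS _ _ (by simpa using huv)).not_gt ((card_le_card hsub).trans_lt (by simpa using hi))

lemma two_pow_le_card_of_isKResolving {S : Finset ((Fin t → Bool) ⊕ (Fin t × Fin k))}
    (hS : IsKResolving (Mtk t k) k S) {i : Fin t} (hi : #(S.toRight.filter (·.1 = i)) < k) :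
    2 ^ (t - 1) ≤ #S := by
  have hcover : univ.filter (fun u : Fin t → Bool => u i = false) ⊆
      S.toLeft.image (Function.update · i false) := by
    intro u hu
    have hui : u i = false := (mem_filter.mp hu).2
    rw [mem_image]
    rcases inl_mem_or_inl_mem_of_isKResolving hS hi (v := Function.update u i true)
      (fun h => by simpa [hui] using congrFun h i)
      (fun a ha => (Function.update_of_ne ha _ _).symm) with hu | hu
    · exact ⟨u, mem_toLeft.mpr hu, by simp [← hui]⟩
    · exact ⟨_, mem_toLeft.mpr hu, by simp [← hui]⟩
  calc 2 ^ (t - 1) = #(univ.filter fun u : Fin t → Bool => u i = false) :=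
        by simpa using (card_filter_apply_eq_false i).symm
    _ ≤ #S.toLeft := (card_le_card hcover).trans card_image_le
    _ ≤ #S := card_toLeft_le

lemma mul_le_card_of_isKResolving (ht : k * t ≤ 2 ^ (t - 1))
    {S : Finset ((Fin t → Bool) ⊕ (Fin t × Fin k))} (hS : IsKResolving (Mtk t k) k S) :
    k * t ≤ #S := by
  by_cases hrows : ∀ i, k ≤ #(S.toRight.filter (·.1 = i))
  · simpa using (mul_card_le_card_of_forall_le_card_filter_fst hrows).trans card_toRight_le
  · push Not at hrows
    obtain ⟨i, hi⟩ := hrows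
    exact ht.trans (two_pow_le_card_of_isKResolving hS hi)

end Mtk

theorem stmt18 (t k : ℕ) (hk : 2 ≤ k) (ht : k + 3 < t) (ht2 : k * t ≤ 2 ^ (t - 1)) :
    kMetricDim (Mtk t k) k = k * t := by
  have hS := Mtk.isKResolving_inr hk (by omega : k ≤ t)
  have hcard : #(univ.map .inr : Finset ((Fin t → Bool) ⊕ (Fin t × Fin k))) = k * t := by
    simp [mul_comm]
  rw [← hcard]
  exact kMetricDim_eq_of_isKResolving hS fun T hT =>
    hcard ▸ Mtk.mul_le_card_of_isKResolving ht2 hT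
end
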